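/- arXiv:1502.06262 — 2 statements merged into one kernel-verified Lean document; each statement's English description precedes it below -/
import Mathlib

section
/- For every M ∈ ℕ, the M-th higher block code Ξ^(M) : Σ_A → Σ_{A^(M)} is continuous. -/
namespace OTW

/-- The Ott-Tomforde-Willis full shift `Σ_A`: sequences over `A ∪ {õ}` (with `õ = none`)
such that once the empty letter `õ` appears, it repeats forever. -/
@[ext]
structure FullShift (A : Type*) where
  val : ℕ → Option A
  tail : ∀ i, val i = none → val (i + 1) = none

variable {A B : Type*}

/-- The shift map `σ`. -/
def shiftMap (x : FullShift A) : FullShift A :=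
  ⟨fun i => x.val (i + 1), fun i hi => x.tail (i + 1) hi⟩

/-- The empty sequence `Ø`. -/
def emptySeq : FullShift A :=
  ⟨fun _ => none, fun _ _ => rfl⟩

theorem val_none_mono (x : FullShift A) :
    ∀ {k m : ℕ}, k ≤ m → x.val k = none → x.val m = none := by
  intro k m h hk
  induction m, h using Nat.le_induction with
  | base => exact hk
  | succ m hm ih => exact x.tail m ih

/-- The finite sequence determined by a word `w : List A`. -/
def finSeq (w : List A) : FullShift A where
  val i := (w.drop i).head?
  tail := by
    intro i hi
    rw [List.head?_eq_none_iff] at hi ⊢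
    rw [List.drop_eq_nil_iff] at hi ⊢
    omega

/-- Generalized cylinder `Z(w, F)`. -/
def Zcyl (w : List A) (F : Finset A) : Set (FullShift A) :=
  {x | (∀ i : Fin w.length, x.val i = some (w.get i)) ∧ ∀ a ∈ F, x.val w.length ≠ some a}

/-- The topology on `Σ_A` generated by the generalized cylinders. -/
instance : TopologicalSpace (FullShift A) :=
  TopologicalSpace.generateFrom {S | ∃ (w : List A) (F : Finset A), S = Zcyl w F}

/-- The letters `L_Λ` used by sequences of `Λ`. -/
def letters (Λ : Set (FullShift A)) : Set A :=
  {a | ∃ x ∈ Λ, ∃ i, x.val i = some a}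

/-- `w` is a (fully lettered) block appearing in some sequence of `Λ`. -/
def IsBlock (Λ : Set (FullShift A)) (w : List A) : Prop :=
  ∃ x ∈ Λ, ∃ n, ∀ i : Fin w.length, x.val (n + i) = some (w.get i)

/-- Ott-Tomforde-Willis shift space: closed, shift invariant, with the
infinite extension property. -/
def IsShiftSpace (Λ : Set (FullShift A)) : Prop :=
  IsClosed Λ ∧ (∀ x ∈ Λ, shiftMap x ∈ Λ) ∧
    (emptySeq ∈ Λ ↔ (letters Λ).Infinite) ∧
    (∀ w : List A, w ≠ [] → (finSeq w ∈ Λ ↔ {b : A | IsBlock Λ (w ++ [b])}.Infinite))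

/-- `x` begins with the block `b` (a word over the extended alphabet `A ∪ {õ}`). -/
def Prefixed (x : FullShift A) (b : List (Option A)) : Prop :=
  ∀ i : Fin b.length, x.val i = b.get i

/-- `(P, Q)` is a representation of `C` as a finitely defined set in `Λ`:
membership in `C` is witnessed by an initial block in `P`, and membership in the
complement by an initial block in `Q`. -/
def FDRep (Λ C : Set (FullShift A)) (P Q : Set (List (Option A))) : Prop :=
  (∀ b ∈ P, b ≠ []) ∧ (∀ b ∈ Q, b ≠ []) ∧
    C = {x ∈ Λ | ∃ b ∈ P, Prefixed x b} ∧
    Λ \ C = {x ∈ Λ | ∃ b ∈ Q, Prefixed x b}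

/-- `C` is a finitely defined set in `Λ`. -/
def FinitelyDefinedIn (Λ C : Set (FullShift A)) : Prop :=
  ∃ P Q, FDRep Λ C P Q

/-- `S` is a finite (possibly empty) union of generalized cylinders of `Λ`. -/
def IsFinUnionCyl (Λ S : Set (FullShift A)) : Prop :=
  ∃ (n : ℕ) (w : Fin n → List A) (F : Fin n → Finset A),
    S = Λ ∩ ⋃ i, Zcyl (w i) (F i)

/-- `Φ` is the sliding block code determined by the partition `{C_a}` of `Λ` into
finitely defined sets, with `C_õ` shift invariant. -/
def IsSBCWith (Λ : Set (FullShift A)) (Φ : FullShift A → FullShift B)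
    (C : Option B → Set (FullShift A)) : Prop :=
  (∀ a, C a ⊆ Λ) ∧ (∀ x ∈ Λ, ∃! a, x ∈ C a) ∧
    (∀ a, FinitelyDefinedIn Λ (C a)) ∧
    (∀ x ∈ C none, shiftMap x ∈ C none) ∧
    (∀ x ∈ Λ, ∀ n : ℕ, shiftMap^[n] x ∈ C ((Φ x).val n))

/-- Sliding block code. -/
def IsSlidingBlockCode (Λ : Set (FullShift A)) (Φ : FullShift A → FullShift B) : Prop :=
  ∃ C, IsSBCWith Λ Φ C

/-- Row-finite shift: every letter has a finite follower set. -/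
def RowFinite (Λ : Set (FullShift A)) : Prop :=
  ∀ a ∈ letters Λ, {b : A | IsBlock Λ [a, b]}.Finite

/-- The `M`-th higher block code `Ξ^(M)`. -/
noncomputable def higherBlock (M : ℕ) (x : FullShift A) : FullShift (Fin M → A) where
  val i := if h : ∀ j : Fin M, (x.val (i + j)).isSome then
      some (fun j => (x.val (i + j)).get (h j)) else none
  tail := by
    intro i hi
    try dsimp only at hi ⊢
    have h1 : ¬ ∀ j : Fin M, (x.val (i + j)).isSome := by
      intro h
      rw [dif_pos h] at hi
      exact absurd hi (by simp)
    push_neg at h1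
    obtain ⟨j, hj⟩ := h1
    have hjn : x.val (i + j) = none := Option.not_isSome_iff_eq_none.mp hj
    have hM : (0 : ℕ) < M := j.pos
    rw [dif_neg]
    intro h2
    have hsome := h2 ⟨M - 1, by omega⟩
    have hnone : x.val (i + 1 + ((⟨M - 1, by omega⟩ : Fin M) : ℕ)) = none := by
      apply val_none_mono x ?_ hjn
      have := j.isLt
      simp only [Fin.val_mk]
      omega
    rw [hnone] at hsome
    simp at hsome

/-! The `i`-th letter of `Ξ^(M) x` depends only on `x_i, …, x_{i+M-1}`, so membership of
`Ξ^(M) x` in `Z(w, F)` depends only on the first `|w| + M` letters of `x`. A neighbourhood of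
such an `x` is therefore the cylinder of its longest defined prefix of length at most `|w| + M`;
when that prefix ends early at an empty letter, the finitely many letters of the blocks in `F`
are forbidden at that position. -/

theorem isOpen_Zcyl (w : List A) (F : Finset A) : IsOpen (Zcyl w F) :=
  TopologicalSpace.isOpen_generateFrom_of_mem ⟨w, F, rfl⟩

theorem lt_of_val_ne_none_of_val_eq_none {x : FullShift A} {m k : ℕ} (hm : x.val m ≠ none)
    (hk : x.val k = none) : m < k := by
  by_contra h
  exact hm (val_none_mono x (not_lt.mp h) hk)

theorem exists_maximal_defined_prefix (x : FullShift A) (N : ℕ) :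
    ∃ k ≤ N, (∀ i < k, x.val i ≠ none) ∧ (k < N → x.val k = none) := by
  classical
  have hex : ∃ k, k = N ∨ x.val k = none := ⟨N, Or.inl rfl⟩
  refine ⟨Nat.find hex, Nat.find_min' hex (Or.inl rfl), fun i hi => ?_, fun hlt => ?_⟩
  · exact fun hnone => Nat.find_min hex hi (Or.inr hnone)
  · exact (Nat.find_spec hex).resolve_left hlt.ne

theorem isOpen_setOf_agree {x : FullShift A} {k : ℕ} (hx : ∀ i < k, x.val i ≠ none)
    (G : Finset A) :
    IsOpen {y : FullShift A | (∀ i < k, y.val i = x.val i) ∧ ∀ a ∈ G, y.val k ≠ some a} := by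
  let w : List A :=
    List.ofFn fun i : Fin k => (x.val i).get (Option.isSome_iff_ne_none.mpr (hx i i.2))
  have hw : w.length = k := List.length_ofFn
  convert isOpen_Zcyl w G using 1
  ext y
  simp only [Zcyl, Set.mem_ofPred_eq, hw, w, List.get_ofFn, Fin.forall_iff, Fin.val_cast,
    Option.some_get]

section HigherBlock

variable {M : ℕ} {x y : FullShift A} {i : ℕ}

theorem higherBlock_val_eq_some_iff {b : Fin M → A} :
    (higherBlock M x).val i = some b ↔ ∀ j : Fin M, x.val (i + j) = some (b j) := by
  simp only [higherBlock]
  split_ifs with h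
  · simp [funext_iff, Option.eq_some_iff_get_eq, h]
  · simp only [false_iff]
    exact fun hb => h fun j => by simp [hb j]

theorem higherBlock_val_congr (h : ∀ j : Fin M, y.val (i + j) = x.val (i + j)) :
    (higherBlock M y).val i = (higherBlock M x).val i := by
  simp only [higherBlock, h]

end HigherBlock

theorem isOpen_higherBlock_preimage_Zcyl (M : ℕ) (w : List (Fin M → A))
    (F : Finset (Fin M → A)) : IsOpen (higherBlock M ⁻¹' Zcyl w F) := by
  classical
  set n := w.length
  refine isOpen_iff_mem_nhds.mpr fun x ⟨hxw, hxF⟩ => ?_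
  obtain ⟨k, -, hdef, hnone⟩ := exists_maximal_defined_prefix x (n + M)
  have hblock : ∀ i < n, ∀ j : Fin M, i + j < k := by
    intro i hi j
    have hsome : x.val (i + j) = some (w.get ⟨i, hi⟩ j) :=
      higherBlock_val_eq_some_iff.mp (hxw ⟨i, hi⟩) j
    by_contra hle
    exact hle (lt_of_val_ne_none_of_val_eq_none (by simp [hsome]) (hnone (by omega)))
  let G : Finset A := if k < n + M then F.biUnion fun f => Finset.univ.image f else ∅
  refine Filter.mem_of_superset ((isOpen_setOf_agree hdef G).mem_nhds ⟨fun _ _ => rfl, ?_⟩) ?_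
  · intro a ha hxa
    have hk : k < n + M := by
      by_contra hk
      simp [G, hk] at ha
    simp [hnone hk] at hxa
  rintro y ⟨hagree, hG⟩
  refine ⟨fun i => ?_, fun f hf hyf => hxF f hf ?_⟩
  · rw [higherBlock_val_congr fun j => hagree _ (hblock i i.2 j)]
    exact hxw i
  rw [higherBlock_val_eq_some_iff] at hyf ⊢
  intro j
  rw [← hyf j]
  refine (hagree _ ?_).symm
  by_contra hle
  have hk : k < n + M := by omega
  have hnk : n ≤ k := by
    by_contra hkn
    simpa using hblock k (by omega) ⟨0, j.pos⟩
  have hyk := hyf ⟨k - n, by omega⟩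
  rw [Fin.val_mk, Nat.add_sub_cancel' hnk] at hyk
  exact hG _ (by simp only [G, if_pos hk]; exact Finset.mem_biUnion.mpr ⟨f, hf, by simp⟩) hyk

theorem higherBlock_continuous_general {A : Type*} (M : ℕ) :
    Continuous (higherBlock M : FullShift A → FullShift (Fin M → A)) :=
  continuous_generateFrom_iff.mpr fun _ ⟨w, F, hS⟩ => hS ▸ isOpen_higherBlock_preimage_Zcyl M w F

/-- the `M`-th higher block code `Ξ^(M) : Σ_A → Σ_{A^(M)}` is
continuous. -/
theorem higherBlock_continuous {A : Type*} [Countable A] [Infinite A]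
    (M : ℕ) (hM : 0 < M) :
    Continuous (higherBlock M : FullShift A → FullShift (Fin M → A)) :=
  higherBlock_continuous_general M

end OTW
end

section
/- Let Λ ⊆ Σ_A be a shift space and Ξ^(M) its M-th higher block code, with Λ* = {x ∈ Λ : l(x) ≥ M}. Then the following are equivalent: (1) every finite sequence in Λ has length < M; (2) Λ* contains no nonempty finite sequences; (3) the inverse of Ξ^(M)|_{Λ*} : Λ* → Λ^(M) is a sliding block code. -/
/-!
Once `Λ*` has no finite sequences it is shift invariant, hence so is its image under `Ξ^(M)`,
and reading off the first letter of each `M`-block is a one-block code inverting `Ξ^(M)` on `Λ*`.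
Conversely the domain of any sliding block code is shift invariant; if `x ∈ Λ*` ends at `k`, then
`σ^k (Ξ^(M) x) = Ø` would lie in `Ξ^(M) Λ*`, whose elements all start with a genuine letter.
-/

namespace OTW

variable {A B : Type*}

theorem iterate_shiftMap_val (n : ℕ) (x : FullShift A) (i : ℕ) :
    (shiftMap^[n] x).val i = x.val (n + i) := by
  induction n generalizing x with
  | zero => simp
  | succ n ih =>
    rw [Function.iterate_succ_apply, ih, Nat.add_right_comm]
    rfl

theorem higherBlock_val_eq_none_iff {M : ℕ} (hM : 0 < M) (x : FullShift A) (i : ℕ) :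
    (higherBlock M x).val i = none ↔ x.val (i + (M - 1)) = none := by
  simp only [higherBlock, dite_eq_right_iff, reduceCtorEq, imp_false, not_forall,
    Option.not_isSome_iff_eq_none]
  constructor
  · rintro ⟨j, hj⟩
    exact val_none_mono x (by omega) hj
  · intro h
    exact ⟨⟨M - 1, by omega⟩, h⟩

theorem semiconj_higherBlock_shiftMap (M : ℕ) :
    Function.Semiconj (higherBlock M : FullShift A → _) shiftMap shiftMap := by
  intro x
  ext1
  funext i
  simp only [higherBlock, shiftMap, Nat.add_right_comm i 1]
  rfl

def FullShift.map (f : A → B) (x : FullShift A) : FullShift B :=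
  ⟨fun i => (x.val i).map f, fun i hi => by
    rw [Option.map_eq_none_iff] at hi ⊢
    exact x.tail i hi⟩

theorem prefixed_singleton (x : FullShift A) (a : Option A) :
    Prefixed x [a] ↔ x.val 0 = a := by
  constructor
  · intro h
    exact h ⟨0, by simp⟩
  · rintro h ⟨i, hi⟩
    obtain rfl : i = 0 := by simpa using hi
    exact h

theorem finitelyDefinedIn_setOf_val_zero (Λ : Set (FullShift A)) (p : Option A → Prop) :
    FinitelyDefinedIn Λ {x ∈ Λ | p (x.val 0)} := by
  refine ⟨{b | ∃ a, b = [a] ∧ p a}, {b | ∃ a, b = [a] ∧ ¬ p a}, ?_, ?_, ?_, ?_⟩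
  · rintro _ ⟨a, rfl, -⟩
    simp
  · rintro _ ⟨a, rfl, -⟩
    simp
  · ext x
    simp [prefixed_singleton]
  · ext x
    simp [prefixed_singleton]

theorem IsSlidingBlockCode.mapsTo_shiftMap {Λ : Set (FullShift A)}
    {Φ : FullShift A → FullShift B}
    (hΦ : IsSlidingBlockCode Λ Φ) : Set.MapsTo shiftMap Λ Λ := by
  obtain ⟨C, hCΛ, -, -, -, hcode⟩ := hΦ
  exact fun x hx => hCΛ _ (hcode x hx 1)

theorem isSlidingBlockCode_map {Λ : Set (FullShift A)} (hΛ : Set.MapsTo shiftMap Λ Λ)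
    (f : A → B) : IsSlidingBlockCode Λ (FullShift.map f) := by
  refine ⟨fun b => {x ∈ Λ | (x.val 0).map f = b}, fun b x hx => hx.1, ?_,
    fun b => finitelyDefinedIn_setOf_val_zero Λ (·.map f = b), ?_, ?_⟩
  · intro x hx
    exact ⟨_, ⟨hx, rfl⟩, fun b hb => hb.2.symm⟩
  · rintro x ⟨hx, hx0⟩
    rw [Option.map_eq_none_iff] at hx0
    exact ⟨hΛ hx, by simp [shiftMap, x.tail 0 hx0]⟩
  · intro x hx n
    exact ⟨hΛ.iterate n hx, by simp [FullShift.map, iterate_shiftMap_val]⟩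

theorem map_higherBlock_of_forall_val_ne_none {M : ℕ} (hM : 0 < M) {x : FullShift A}
    (hx : ∀ i, x.val i ≠ none) : FullShift.map (· ⟨0, hM⟩) (higherBlock M x) = x := by
  ext1
  funext i
  have hsome : ∀ j : Fin M, (x.val (i + j)).isSome := fun j => Option.isSome_iff_ne_none.2 (hx _)
  change ((higherBlock M x).val i).map _ = x.val i
  rw [show (higherBlock M x).val i = some _ from dif_pos hsome]
  simp

theorem higherBlock_inverse_slidingBlockCode_iff_general {A : Type*}
    (M : ℕ) (hM : 0 < M) (Λ : Set (FullShift A)) (hΛ : IsShiftSpace Λ) :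
    ((∀ x ∈ Λ, (∃ k, x.val k = none) → x.val (M - 1) = none) ↔
      (∀ x ∈ {x ∈ Λ | ∀ j < M, x.val j ≠ none}, (∃ k, x.val k = none) → x = emptySeq)) ∧
    ((∀ x ∈ {x ∈ Λ | ∀ j < M, x.val j ≠ none}, (∃ k, x.val k = none) → x = emptySeq) ↔
      (∃ Ψ : FullShift (Fin M → A) → FullShift A,
        (∀ x ∈ {x ∈ Λ | ∀ j < M, x.val j ≠ none}, Ψ (higherBlock M x) = x) ∧
        IsSlidingBlockCode (higherBlock M '' {x ∈ Λ | ∀ j < M, x.val j ≠ none}) Ψ)) := by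
  set Λs := {x ∈ Λ | ∀ j < M, x.val j ≠ none}
  have hΛs_long : ∀ x ∈ Λs, x.val (M - 1) ≠ none := fun x hx => hx.2 _ (by omega)
  have hΛs_of_long : ∀ x ∈ Λ, x.val (M - 1) ≠ none → x ∈ Λs := fun x hx hlong =>
    ⟨hx, fun j hj hj0 => hlong (val_none_mono x (by omega) hj0)⟩
  refine ⟨⟨fun h1 x hx hfin => (hΛs_long x hx (h1 x hx.1 hfin)).elim,
      fun h2 x hx hfin => ?_⟩,
    ⟨fun h2 => ?_, fun ⟨Ψ, _, hΨ⟩ x hx ⟨k, hk⟩ => ?_⟩⟩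
  · by_contra hlong
    exact hlong (by rw [h2 x (hΛs_of_long x hx hlong) hfin]; rfl)
  · have hinf : ∀ x ∈ Λs, ∀ i, x.val i ≠ none := fun x hx i hi =>
      hx.2 0 hM (by rw [h2 x hx ⟨i, hi⟩]; rfl)
    have hΛs : Set.MapsTo shiftMap Λs Λs := fun x hx =>
      ⟨hΛ.2.1 x hx.1, fun _ _ => hinf x hx _⟩
    exact ⟨FullShift.map (· ⟨0, hM⟩),
      fun x hx => map_higherBlock_of_forall_val_ne_none hM (hinf x hx),
      isSlidingBlockCode_map ((semiconj_higherBlock_shiftMap M).mapsTo_image hΛs) _⟩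
  · obtain ⟨y, hy, hyx⟩ := hΨ.mapsTo_shiftMap.iterate k (Set.mem_image_of_mem _ hx)
    have hy0 : (higherBlock M y).val 0 = none := by
      rw [hyx, iterate_shiftMap_val, higherBlock_val_eq_none_iff hM]
      exact val_none_mono x (by omega) hk
    rw [higherBlock_val_eq_none_iff hM, zero_add] at hy0
    exact (hΛs_long y hy hy0).elim

/-- for `Λ* = {x ∈ Λ : l(x) ≥ M}`, the following are equivalent:
(1) every finite sequence of `Λ` has length `< M`; (2) `Λ*` contains no nonempty
finite sequence; (3) the inverse of `Ξ^(M)|_{Λ*}` is a sliding block code. -/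
theorem higherBlock_inverse_slidingBlockCode_iff {A : Type*} [Countable A] [Infinite A]
    (M : ℕ) (hM : 0 < M) (Λ : Set (FullShift A)) (hΛ : IsShiftSpace Λ) :
    ((∀ x ∈ Λ, (∃ k, x.val k = none) → x.val (M - 1) = none) ↔
      (∀ x ∈ {x ∈ Λ | ∀ j < M, x.val j ≠ none}, (∃ k, x.val k = none) → x = emptySeq)) ∧
    ((∀ x ∈ {x ∈ Λ | ∀ j < M, x.val j ≠ none}, (∃ k, x.val k = none) → x = emptySeq) ↔
      (∃ Ψ : FullShift (Fin M → A) → FullShift A,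
        (∀ x ∈ {x ∈ Λ | ∀ j < M, x.val j ≠ none}, Ψ (higherBlock M x) = x) ∧
        IsSlidingBlockCode (higherBlock M '' {x ∈ Λ | ∀ j < M, x.val j ≠ none}) Ψ)) :=
  higherBlock_inverse_slidingBlockCode_iff_general M hM Λ hΛ

end OTW
end
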